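/- If M• ∈ C(P) is an acyclic Z/2-graded complex of projectives, then there exist objects P, Q ∈ P, unique up to isomorphism, such that M• ≅ K_P ⊕ K_Q^†. -/

import Mathlib

set_option linter.unusedSectionVars false

open CategoryTheory CategoryTheory.Limits Opposite

noncomputable section

universe u

variable (k : Type) [Field k] [Fintype k]
variable (R : Type u) [SmallCategory R] [Abelian R] [Linear k R] [EnoughProjectives R]

/-- The objects `A` of `R` such that `Hom(M, A)` is a finite set for every `M`. -/
def IsFinHom (A : R) : Prop := ∀ M : R, Finite (M ⟶ A)

/-- The Euler form `⟨M,A⟩ = dim Hom(M,A) - dim Ext¹(M,A)`. -/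
def euler (M A : R) : ℤ :=
  (Module.finrank k (M ⟶ A) : ℤ) -
    (Module.finrank k (((_root_.Ext k R 1).obj (op M)).obj A) : ℤ)

/-- The set of relations defining the Grothendieck group of `R`. -/
def sesSet : Set (FreeAbelianGroup R) :=
  {x | ∃ S : ShortComplex R, S.ShortExact ∧
    x = FreeAbelianGroup.of S.X₂ - FreeAbelianGroup.of S.X₁ - FreeAbelianGroup.of S.X₃}

/-- The Grothendieck group `K(R)`. -/
abbrev K0 := FreeAbelianGroup R ⧸ AddSubgroup.closure (sesSet R)

/-- The class of an object in `K(R)`. -/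
def K0.cls (X : R) : K0 R := QuotientAddGroup.mk (FreeAbelianGroup.of X)

/-- The set of relations defining the Grothendieck group of the subcategory `A`. -/
def sesSetA : Set (FreeAbelianGroup {A : R // IsFinHom R A}) :=
  {x | ∃ (S : ShortComplex R) (h1 : IsFinHom R S.X₁) (h2 : IsFinHom R S.X₂)
      (h3 : IsFinHom R S.X₃), S.ShortExact ∧
    x = FreeAbelianGroup.of ⟨S.X₂, h2⟩ - FreeAbelianGroup.of ⟨S.X₁, h1⟩ -
      FreeAbelianGroup.of ⟨S.X₃, h3⟩}

/-- The Grothendieck group `K(A)`. -/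
abbrev KA := FreeAbelianGroup {A : R // IsFinHom R A} ⧸ AddSubgroup.closure (sesSetA R)

/-- The class of an object of `A` in `K(A)`. -/
def KA.cls (A : {A : R // IsFinHom R A}) : KA R := QuotientAddGroup.mk (FreeAbelianGroup.of A)

/-- `R` is hereditary, i.e. of global dimension at most 1. -/
def Hereditary : Prop :=
  ∀ X Y : R, Subsingleton (((_root_.Ext k R 2).obj (op X)).obj Y)

/-- Condition (c): cancellation for projectives. -/
def CondC : Prop :=
  ∀ P Q M : R, Projective P → Projective Q → Projective M →
    Nonempty ((M ⊞ P) ≅ (M ⊞ Q)) → Nonempty (P ≅ Q)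

/-- Condition (d): every element of `K(R)` is a `ℚ`-linear combination of classes of
objects of `A`. -/
def CondD : Prop :=
  ∀ x : K0 R, ∃ n : ℕ, n ≠ 0 ∧ (n : ℤ) • x ∈
    AddSubgroup.closure (Set.range fun A : {A : R // IsFinHom R A} => K0.cls R A.1)

/-- Condition (e). -/
def CondE : Prop :=
  ∀ A B : R, IsFinHom R A → IsFinHom R B → K0.cls R A = K0.cls R B →
    ∀ P : R, Projective P → Nat.card (P ⟶ A) = Nat.card (P ⟶ B)

structure Z2Cx where
  X0 : R
  X1 : R
  d0 : X0 ⟶ X1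
  d1 : X1 ⟶ X0
  d01 : d0 ≫ d1 = 0
  d10 : d1 ≫ d0 = 0

namespace Z2Cx

variable {R}

/-- Morphisms of `ℤ/2`-graded complexes. -/
@[ext] structure Hom (M N : Z2Cx R) where
  f0 : M.X0 ⟶ N.X0
  f1 : M.X1 ⟶ N.X1
  comm0 : M.d0 ≫ f1 = f0 ≫ N.d0
  comm1 : M.d1 ≫ f0 = f1 ≫ N.d1

instance : CategoryStruct (Z2Cx R) where
  Hom := Hom
  id M := ⟨𝟙 _, 𝟙 _, by simp, by simp⟩
  comp {M N P} f g := ⟨f.f0 ≫ g.f0, f.f1 ≫ g.f1, by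
      rw [← Category.assoc, f.comm0, Category.assoc, g.comm0, Category.assoc], by
      rw [← Category.assoc, f.comm1, Category.assoc, g.comm1, Category.assoc]⟩

@[simp] lemma id_f0 (M : Z2Cx R) : (𝟙 M : Hom M M).f0 = 𝟙 M.X0 := rfl
@[simp] lemma id_f1 (M : Z2Cx R) : (𝟙 M : Hom M M).f1 = 𝟙 M.X1 := rfl
@[simp] lemma comp_f0 {M N P : Z2Cx R} (f : M ⟶ N) (g : N ⟶ P) :
    (f ≫ g).f0 = Hom.f0 f ≫ Hom.f0 g := rfl
@[simp] lemma comp_f1 {M N P : Z2Cx R} (f : M ⟶ N) (g : N ⟶ P) :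
    (f ≫ g).f1 = Hom.f1 f ≫ Hom.f1 g := rfl

instance : Category (Z2Cx R) where
  id_comp f := by apply Hom.ext <;> simp
  comp_id f := by apply Hom.ext <;> simp
  assoc f g h := by apply Hom.ext <;> simp

variable (R)

/-- The two-term complex `C_f` associated to a morphism `f`, concentrated so that
`X1 = P`, `X0 = Q`, `d1 = f`, `d0 = 0`. -/
def Cf {P Q : R} (f : P ⟶ Q) : Z2Cx R := ⟨Q, P, 0, f, by simp, by simp⟩

/-- The shift involution `†`: it interchanges the gradings and negates the differentials. -/
def dagger (M : Z2Cx R) : Z2Cx R :=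
  ⟨M.X1, M.X0, -M.d1, -M.d0, by simp [M.d10], by simp [M.d01]⟩

/-- The acyclic complex `K_P` with `d1 = 𝟙 P` and `d0 = 0`. -/
def KP (P : R) : Z2Cx R := ⟨P, P, 0, 𝟙 P, by simp, by simp⟩

/-- Direct sum of `ℤ/2`-graded complexes. -/
def dsum (M N : Z2Cx R) : Z2Cx R where
  X0 := M.X0 ⊞ N.X0
  X1 := M.X1 ⊞ N.X1
  d0 := biprod.map M.d0 N.d0
  d1 := biprod.map M.d1 N.d1
  d01 := by ext <;> simp [M.d01, N.d01]
  d10 := by ext <;> simp [M.d10, N.d10]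

/-- Degree `0` homology of a `ℤ/2`-graded complex. -/
def H0 (M : Z2Cx R) : R := (ShortComplex.mk M.d1 M.d0 M.d10).homology

/-- Degree `1` homology of a `ℤ/2`-graded complex. -/
def H1 (M : Z2Cx R) : R := (ShortComplex.mk M.d0 M.d1 M.d01).homology

/-- The homology complex `H•(M•)`, with zero differentials. -/
def Hcx (M : Z2Cx R) : Z2Cx R := ⟨H0 R M, H1 R M, 0, 0, by simp, by simp⟩

/-- A complex is acyclic if its homology vanishes. -/
def Acyclic (M : Z2Cx R) : Prop := IsZero (H0 R M) ∧ IsZero (H1 R M)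

end Z2Cx

open Z2Cx

section AuxSplit

lemma splitIsoA {K X Y : R} (κ : K ⟶ X) (f : X ⟶ Y) (s : Y ⟶ X) [Mono κ]
    (hκ : κ ≫ f = 0) (hs : s ≫ f = 𝟙 Y)
    (hfac : ∀ {W : R} (t : W ⟶ X), t ≫ f = 0 → ∃ u : W ⟶ K, u ≫ κ = t) :
    IsIso (biprod.desc κ s) := by
  obtain ⟨ρ, hρ⟩ := hfac (𝟙 X - f ≫ s) (by simp [hs])
  have hκρ : κ ≫ ρ = 𝟙 K := by
    rw [← cancel_mono κ, Category.assoc, hρ]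
    simp [reassoc_of% hκ]
  have hsρ : s ≫ ρ = 0 := by
    rw [← cancel_mono κ, Category.assoc, hρ]
    simp [reassoc_of% hs]
  refine ⟨biprod.lift ρ f, ?_, ?_⟩
  · apply biprod.hom_ext' <;> apply biprod.hom_ext <;>
      simp [hκρ, hκ, hsρ, hs]
  · rw [biprod.lift_desc, hρ]; simp

lemma splitIsoB {K X Y : R} (κ : K ⟶ X) (f : X ⟶ Y) (s : Y ⟶ X) [Mono κ]
    (hκ : κ ≫ f = 0) (hs : s ≫ f = 𝟙 Y)
    (hfac : ∀ {W : R} (t : W ⟶ X), t ≫ f = 0 → ∃ u : W ⟶ K, u ≫ κ = t) :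
    IsIso (biprod.desc s κ) := by
  obtain ⟨ρ, hρ⟩ := hfac (𝟙 X - f ≫ s) (by simp [hs])
  have hκρ : κ ≫ ρ = 𝟙 K := by
    rw [← cancel_mono κ, Category.assoc, hρ]
    simp [reassoc_of% hκ]
  have hsρ : s ≫ ρ = 0 := by
    rw [← cancel_mono κ, Category.assoc, hρ]
    simp [reassoc_of% hs]
  refine ⟨biprod.lift f ρ, ?_, ?_⟩
  · apply biprod.hom_ext' <;> apply biprod.hom_ext <;>
      simp [hκρ, hκ, hsρ, hs]
  · rw [biprod.lift_desc, hρ]; simp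

/-- Kernel of `biprod.map f g` with `f` iso and `g = 0` is the second factor. -/
def kerBiprodA {P Q P2 Q2 : R} (f : P ⟶ P2) (g : Q ⟶ Q2) [IsIso f] (hg : g = 0) :
    kernel (biprod.map f g) ≅ Q where
  hom := kernel.ι _ ≫ biprod.snd
  inv := kernel.lift _ biprod.inr (by rw [biprod.inr_map, hg, zero_comp])
  hom_inv_id := by
    have h1 : kernel.ι (biprod.map f g) ≫ biprod.fst = 0 := by
      rw [← cancel_mono f, Category.assoc, ← biprod.map_fst, ← Category.assoc,
        kernel.condition, zero_comp, zero_comp]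
    ext <;> simp [h1]
  inv_hom_id := by simp

/-- Kernel of `biprod.map f g` with `f = 0` and `g` iso is the first factor. -/
def kerBiprodB {P Q P2 Q2 : R} (f : P ⟶ P2) (g : Q ⟶ Q2) (hf : f = 0) [IsIso g] :
    kernel (biprod.map f g) ≅ P where
  hom := kernel.ι _ ≫ biprod.fst
  inv := kernel.lift _ biprod.inl (by rw [biprod.inl_map, hf, zero_comp])
  hom_inv_id := by
    have h1 : kernel.ι (biprod.map f g) ≫ biprod.snd = 0 := by
      rw [← cancel_mono g, Category.assoc, ← biprod.map_snd, ← Category.assoc,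
        kernel.condition, zero_comp, zero_comp]
    ext <;> simp [h1]
  inv_hom_id := by simp

/-- A morphism of `ℤ/2`-graded complexes whose components are isomorphisms gives
an isomorphism. -/
lemma z2cxIso {M N : Z2Cx R} (f : M ⟶ N) (hf0 : IsIso f.f0) (hf1 : IsIso f.f1) :
    Nonempty (M ≅ N) := by
  refine ⟨⟨f, ⟨inv f.f0, inv f.f1, ?_, ?_⟩, ?_, ?_⟩⟩
  · rw [IsIso.eq_inv_comp, ← Category.assoc, ← f.comm0, Category.assoc, IsIso.hom_inv_id,
      Category.comp_id]
  · rw [IsIso.eq_inv_comp, ← Category.assoc, ← f.comm1, Category.assoc, IsIso.hom_inv_id,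
      Category.comp_id]
  · apply Z2Cx.Hom.ext <;> simp
  · apply Z2Cx.Hom.ext <;> simp

end AuxSplit

lemma projective_of_mono (hH : Hereditary k R) {A X₀ : R} (i : A ⟶ X₀) [Mono i]
    (hX : Projective X₀) : Projective A := by
  classical
  let QA := ProjectiveResolution.of A
  let ε : QA.complex.X 0 ⟶ A :=
    QA.π.f 0 ≫ (HomologicalComplex.singleObjXSelf (ComplexShape.down ℕ) 0 A).hom
  have hdε : QA.complex.d 1 0 ≫ ε = 0 := by
    dsimp only [ε]
    rw [← Category.assoc, QA.complex_d_comp_π_f_zero, zero_comp]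
  have hεepi : Epi ε := epi_comp _ _
  have hexA : (ShortComplex.mk (QA.complex.d 1 0) ε hdε).Exact := by
    refine (ShortComplex.exact_iff_of_epi_of_isIso_of_mono
      ((⟨𝟙 _, 𝟙 _, (HomologicalComplex.singleObjXSelf (ComplexShape.down ℕ) 0 A).hom,
        by simp, by simp [ε]⟩ :
        (ShortComplex.mk (QA.complex.d 1 0) (QA.π.f 0) QA.complex_d_comp_π_f_zero) ⟶
        (ShortComplex.mk (QA.complex.d 1 0) ε hdε)))).1 QA.exact₀
  -- the resolution complex of `C0 := cokernel i`
  let RX : ℕ → R := fun n => match n with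
    | 0 => X₀
    | (n+1) => QA.complex.X n
  let Rd : ∀ n, RX (n+1) ⟶ RX n := fun n => match n with
    | 0 => ε ≫ i
    | (n+1) => QA.complex.d (n+1) n
  have Rsq : ∀ n, Rd (n+1) ≫ Rd n = 0 := by
    rintro (_|n)
    · show QA.complex.d 1 0 ≫ (ε ≫ i) = 0
      rw [← Category.assoc, hdε, zero_comp]
    · show QA.complex.d (n+2) (n+1) ≫ QA.complex.d (n+1) n = 0
      simp
  let Rcx : ChainComplex R ℕ := ChainComplex.of RX Rd Rsq
  have hd10 : Rcx.d 1 0 = ε ≫ i := ChainComplex.of_d RX (fun n => Rd n) 0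
  have hd21 : Rcx.d 2 1 = QA.complex.d 1 0 := ChainComplex.of_d RX (fun n => Rd n) 1
  have hd32 : Rcx.d 3 2 = QA.complex.d 2 1 := ChainComplex.of_d RX (fun n => Rd n) 2
  have hπ0 : ∀ (j : ℕ), (ComplexShape.down ℕ).Rel j 0 → Rcx.d j 0 ≫ cokernel.π i = 0 := by
    intro j hj
    obtain rfl : 1 = j := by simpa using hj
    rw [hd10, Category.assoc, cokernel.condition, comp_zero]
  let Rπ : Rcx ⟶ (ChainComplex.single₀ R).obj (cokernel i) :=
    HomologicalComplex.mkHomToSingle (cokernel.π i) hπ0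
  have hRπ0 : Rπ.f 0 = cokernel.π i ≫
      (HomologicalComplex.singleObjXSelf (ComplexShape.down ℕ) 0 (cokernel i)).inv :=
    HomologicalComplex.mkHomToSingle_f _ _
  -- exactness of Rcx in positive degrees
  have hexact : ∀ n, Rcx.ExactAt (n + 1) := by
    rintro (_|n)
    · rw [HomologicalComplex.exactAt_iff' Rcx 2 1 0 (by simp) (by simp)]
      have : (ShortComplex.mk (Rcx.d 2 1) (Rcx.d 1 0) (Rcx.d_comp_d 2 1 0)).Exact := by
        refine (ShortComplex.exact_iff_of_epi_of_isIso_of_mono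
          ((⟨𝟙 _, 𝟙 _, i, by simp [hd21], by simp [hd10, hd21]⟩ :
            (ShortComplex.mk (QA.complex.d 1 0) ε hdε) ⟶
            (ShortComplex.mk (Rcx.d 2 1) (Rcx.d 1 0) (Rcx.d_comp_d 2 1 0))))).1 hexA
      exact this
    · rw [HomologicalComplex.exactAt_iff' Rcx (n+3) (n+2) (n+1) (by simp) (by simp)]
      have : (ShortComplex.mk (Rcx.d (n+3) (n+2)) (Rcx.d (n+2) (n+1))
          (Rcx.d_comp_d _ _ _)).Exact := by
        refine (ShortComplex.exact_iff_of_epi_of_isIso_of_mono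
          ((⟨𝟙 _, 𝟙 _, 𝟙 _, ?_, ?_⟩ :
            (ShortComplex.mk (QA.complex.d (n+2) (n+1)) (QA.complex.d (n+1) n)
              (QA.complex.d_comp_d _ _ _)) ⟶
            (ShortComplex.mk (Rcx.d (n+3) (n+2)) (Rcx.d (n+2) (n+1))
              (Rcx.d_comp_d _ _ _))))).1 (QA.exact_succ n)
        · simp only [Category.id_comp, Category.comp_id]
          exact ChainComplex.of_d RX (fun n => Rd n) (n+2)
        · simp only [Category.id_comp, Category.comp_id]
          exact ChainComplex.of_d RX (fun n => Rd n) (n+1)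
      exact this
  -- exactness of Q1 -> Q0 -> cokernel i at degree 0 (augmented)
  have hexC : (ShortComplex.mk (Rcx.d 1 0) (Rπ.f 0)
      (by rw [hRπ0, ← Category.assoc, hπ0 1 (by simp), zero_comp])).Exact := by
    have e1 : (ShortComplex.mk i (cokernel.π i) (cokernel.condition i)).Exact :=
      ShortComplex.exact_of_g_is_cokernel _ (cokernelIsCokernel i)
    have e2 : (ShortComplex.mk (Rcx.d 1 0) (cokernel.π i)
        (by rw [hd10, Category.assoc, cokernel.condition, comp_zero])).Exact := by
      refine (ShortComplex.exact_iff_of_epi_of_isIso_of_mono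
        ((⟨ε, 𝟙 _, 𝟙 _, by simp [hd10], by simp⟩ :
          (ShortComplex.mk (Rcx.d 1 0) (cokernel.π i) _) ⟶
          (ShortComplex.mk i (cokernel.π i) (cokernel.condition i))))).2 e1
    refine (ShortComplex.exact_iff_of_epi_of_isIso_of_mono
      ((⟨𝟙 _, 𝟙 _, (HomologicalComplex.singleObjXSelf (ComplexShape.down ℕ) 0
          (cokernel i)).inv, by simp, by simp [hRπ0]⟩ :
        (ShortComplex.mk (Rcx.d 1 0) (cokernel.π i) _) ⟶
        (ShortComplex.mk (Rcx.d 1 0) (Rπ.f 0) _)))).1 e2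
  have hq0 : QuasiIsoAt Rπ 0 := by
    rw [ChainComplex.quasiIsoAt₀_iff, ShortComplex.quasiIso_iff_of_zeros']
    · constructor
      · exact hexC
      · show Epi (Rπ.f 0)
        rw [hRπ0]; exact epi_comp _ _
    all_goals rfl
  let RC : ProjectiveResolution (cokernel i) :=
    { complex := Rcx
      projective := by
        rintro (_|n)
        · exact hX
        · exact QA.projective n
      π := Rπ
      quasiIso := ⟨fun n => by
        cases n with
        | zero => exact hq0
        | succ n =>
          rw [quasiIsoAt_iff_exactAt']
          · exact hexact n
          · apply ChainComplex.exactAt_succ_single_obj⟩ }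
  have key : ∀ (B : R) (u : QA.complex.X 1 ⟶ B), QA.complex.d 2 1 ≫ u = 0 →
      ∃ v : QA.complex.X 0 ⟶ B, QA.complex.d 1 0 ≫ v = u := by
    intro B u hu
    have hsub : Subsingleton ((Rcx.linearYonedaObj k B).homology 2) := by
      have e := RC.isoExt (R := k) 2 B
      have := hH (cokernel i) B
      exact ((forget (ModuleCat k)).mapIso e).toEquiv.symm.subsingleton
    have hz : IsZero ((Rcx.linearYonedaObj k B).homology 2) :=
      ModuleCat.isZero_of_subsingleton _
    have hexat : (Rcx.linearYonedaObj k B).ExactAt 2 :=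
      (HomologicalComplex.exactAt_iff_isZero_homology _ _).2 hz
    rw [HomologicalComplex.exactAt_iff' _ 1 2 3 (by simp) (by simp),
      ShortComplex.moduleCat_exact_iff] at hexat
    obtain ⟨v, hv⟩ := hexat u (by
      show (Rcx.linearYonedaObj k B).d 2 3 u = 0
      rw [ChainComplex.linearYonedaObj_d]
      show Rcx.d 3 2 ≫ u = 0
      rw [hd32]; exact hu)
    refine ⟨v, ?_⟩
    have hv' : (Rcx.linearYonedaObj k B).d 1 2 v = u := hv
    rw [ChainComplex.linearYonedaObj_d] at hv'
    have hv'' : Rcx.d 2 1 ≫ v = u := hv'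
    rw [hd21] at hv''
    exact hv''
  -- construct a section of ε and conclude
  have hpQ0 := QA.projective 0
  obtain ⟨v, hv⟩ := key (kernel ε) (kernel.lift ε (QA.complex.d 1 0) hdε) (by
    rw [← cancel_mono (kernel.ι ε)]
    simp)
  have hepi_u : Epi (kernel.lift ε (QA.complex.d 1 0) hdε) := by
    have h := hexA
    rw [ShortComplex.exact_iff_epi_kernel_lift] at h
    exact h
  have hιv : kernel.ι ε ≫ v = 𝟙 (kernel ε) := by
    rw [← cancel_epi (kernel.lift ε (QA.complex.d 1 0) hdε), ← Category.assoc,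
      kernel.lift_ι, hv, Category.comp_id]
  have h0 : kernel.ι ε ≫ (𝟙 _ - v ≫ kernel.ι ε) = 0 := by
    rw [Preadditive.comp_sub, Category.comp_id, ← Category.assoc, hιv, Category.id_comp,
      sub_self]
  have ht : Abelian.epiDesc ε (𝟙 _ - v ≫ kernel.ι ε) h0 ≫ ε = 𝟙 A := by
    rw [← cancel_epi ε, ← Category.assoc, Abelian.comp_epiDesc]
    rw [Preadditive.sub_comp, Category.id_comp, Category.assoc, kernel.condition,
      comp_zero, sub_zero, Category.comp_id]
  constructor
  intro E Z f e he
  refine ⟨Abelian.epiDesc ε (𝟙 _ - v ≫ kernel.ι ε) h0 ≫ Projective.factorThru (ε ≫ f) e, ?_⟩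
  rw [Category.assoc, Projective.factorThru_comp, ← Category.assoc, ht, Category.id_comp]



theorem stmt5 (hH : Hereditary k R) (hc : CondC R) (hd : CondD R) (he : CondE R)
    (M : Z2Cx R) (h0 : Projective M.X0) (h1 : Projective M.X1) (hac : Acyclic R M) :
    ∃ (P Q : R), Projective P ∧ Projective Q ∧
      Nonempty (M ≅ dsum R (KP R P) (dagger R (KP R Q))) ∧
      (∀ P' Q' : R, Projective P' → Projective Q' →
        Nonempty (M ≅ dsum R (KP R P') (dagger R (KP R Q'))) →
        Nonempty (P ≅ P') ∧ Nonempty (Q ≅ Q')) := by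
  obtain ⟨hHo0, hHo1⟩ := hac
  have ex0 : (ShortComplex.mk M.d1 M.d0 M.d10).Exact :=
    (ShortComplex.exact_iff_isZero_homology _).2 hHo0
  have ex1 : (ShortComplex.mk M.d0 M.d1 M.d01).Exact :=
    (ShortComplex.exact_iff_isZero_homology _).2 hHo1
  rw [ShortComplex.exact_iff_epi_kernel_lift] at ex0 ex1
  let P : R := kernel M.d0
  let Q : R := kernel M.d1
  let p1 : M.X1 ⟶ P := kernel.lift M.d0 M.d1 M.d10
  let p0 : M.X0 ⟶ Q := kernel.lift M.d1 M.d0 M.d01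
  have hp1 : p1 ≫ kernel.ι M.d0 = M.d1 := kernel.lift_ι _ _ _
  have hp0 : p0 ≫ kernel.ι M.d1 = M.d0 := kernel.lift_ι _ _ _
  have hP : Projective P := projective_of_mono k R hH (kernel.ι M.d0) h0
  have hQ : Projective Q := projective_of_mono k R hH (kernel.ι M.d1) h1
  haveI := hP; haveI := hQ
  haveI ep1 : Epi p1 := ex0
  haveI ep0 : Epi p0 := ex1
  let s1 : P ⟶ M.X1 := Projective.factorThru (𝟙 P) p1
  let s0 : Q ⟶ M.X0 := Projective.factorThru (𝟙 Q) p0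
  have hs1 : s1 ≫ p1 = 𝟙 P := Projective.factorThru_comp _ _
  have hs0 : s0 ≫ p0 = 𝟙 Q := Projective.factorThru_comp _ _
  -- splitting isomorphisms
  have hκ1 : kernel.ι M.d1 ≫ p1 = 0 := by
    rw [← cancel_mono (kernel.ι M.d0), Category.assoc, hp1, kernel.condition, zero_comp]
  have hκ0 : kernel.ι M.d0 ≫ p0 = 0 := by
    rw [← cancel_mono (kernel.ι M.d1), Category.assoc, hp0, kernel.condition, zero_comp]
  have hfac1 : ∀ {W : R} (t : W ⟶ M.X1), t ≫ p1 = 0 → ∃ u : W ⟶ Q, u ≫ kernel.ι M.d1 = t := by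
    intro W t ht
    have : t ≫ M.d1 = 0 := by rw [← hp1, ← Category.assoc, ht, zero_comp]
    exact ⟨kernel.lift M.d1 t this, kernel.lift_ι _ _ _⟩
  have hfac0 : ∀ {W : R} (t : W ⟶ M.X0), t ≫ p0 = 0 → ∃ u : W ⟶ P, u ≫ kernel.ι M.d0 = t := by
    intro W t ht
    have : t ≫ M.d0 = 0 := by rw [← hp0, ← Category.assoc, ht, zero_comp]
    exact ⟨kernel.lift M.d0 t this, kernel.lift_ι _ _ _⟩
  haveI i1 : IsIso (biprod.desc s1 (kernel.ι M.d1)) :=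
    splitIsoB R (kernel.ι M.d1) p1 s1 hκ1 hs1 hfac1
  haveI i0 : IsIso (biprod.desc (kernel.ι M.d0) s0) :=
    splitIsoA R (kernel.ι M.d0) p0 s0 hκ0 hs0 hfac0
  haveI : IsIso (-(𝟙 Q)) := ⟨-(𝟙 Q), by simp, by simp⟩
  haveI imap : IsIso (biprod.map (𝟙 P) (-(𝟙 Q))) :=
    ⟨biprod.map (𝟙 P) (-(𝟙 Q)), by ext <;> simp, by ext <;> simp⟩
  have hd0 : M.d0 = p0 ≫ kernel.ι M.d1 := hp0.symm
  have hd1 : M.d1 = p1 ≫ kernel.ι M.d0 := hp1.symm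
  let f0' : (dsum R (KP R P) (dagger R (KP R Q))).X0 ⟶ M.X0 :=
    biprod.map (𝟙 P) (-(𝟙 Q)) ≫ biprod.desc (kernel.ι M.d0) s0
  let f1' : (dsum R (KP R P) (dagger R (KP R Q))).X1 ⟶ M.X1 :=
    biprod.desc s1 (kernel.ι M.d1)
  haveI if0 : IsIso f0' := @IsIso.comp_isIso _ _ _ _ _ _ _ imap i0
  let f : Z2Cx.Hom (dsum R (KP R P) (dagger R (KP R Q))) M :=
    { f0 := f0'
      f1 := f1'
      comm0 := by
        apply biprod.hom_ext'
        · show biprod.inl ≫ (dsum R (KP R P) (dagger R (KP R Q))).d0 ≫ f1' =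
            biprod.inl ≫ f0' ≫ M.d0
          dsimp only [dsum, KP, dagger, f0', f1']
          erw [biprod.inl_map_assoc]
          simp [hd0, reassoc_of% hs0, reassoc_of% hκ0]
          erw [biprod.inl_map_assoc]
          simp [hd0, reassoc_of% hs0, reassoc_of% hκ0]
        · show biprod.inr ≫ (dsum R (KP R P) (dagger R (KP R Q))).d0 ≫ f1' =
            biprod.inr ≫ f0' ≫ M.d0
          dsimp only [dsum, KP, dagger, f0', f1']
          erw [biprod.inr_map_assoc]
          simp [hd0, reassoc_of% hs0, reassoc_of% hκ0]
          erw [biprod.inr_map_assoc]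
          simp [hd0, reassoc_of% hs0, reassoc_of% hκ0]
      comm1 := by
        apply biprod.hom_ext'
        · show biprod.inl ≫ (dsum R (KP R P) (dagger R (KP R Q))).d1 ≫ f0' =
            biprod.inl ≫ f1' ≫ M.d1
          dsimp only [dsum, KP, dagger, f0', f1']
          erw [biprod.inl_map_assoc]
          simp [hd1, reassoc_of% hs1, reassoc_of% hκ1]
          erw [biprod.inl_desc_assoc]
          simp [hd1, reassoc_of% hs1, reassoc_of% hκ1]
        · show biprod.inr ≫ (dsum R (KP R P) (dagger R (KP R Q))).d1 ≫ f0' =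
            biprod.inr ≫ f1' ≫ M.d1
          dsimp only [dsum, KP, dagger, f0', f1']
          erw [biprod.inr_map_assoc]
          simp [hd1, reassoc_of% hs1, reassoc_of% hκ1]
          erw [biprod.inr_desc_assoc]
          simp [hd1, reassoc_of% hs1, reassoc_of% hκ1] }
  obtain ⟨e⟩ := z2cxIso R f if0 i1
  refine ⟨P, Q, hP, hQ, ⟨e.symm⟩, ?_⟩
  -- uniqueness
  intro P' Q' hP' hQ' ⟨e'⟩
  haveI : IsIso e'.hom.f0 :=
    ⟨e'.inv.f0,
      by have h := congrArg Z2Cx.Hom.f0 e'.hom_inv_id; rw [comp_f0, id_f0] at h; exact h,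
      by have h := congrArg Z2Cx.Hom.f0 e'.inv_hom_id; rw [comp_f0, id_f0] at h; exact h⟩
  haveI : IsIso e'.hom.f1 :=
    ⟨e'.inv.f1,
      by have h := congrArg Z2Cx.Hom.f1 e'.hom_inv_id; rw [comp_f1, id_f1] at h; exact h,
      by have h := congrArg Z2Cx.Hom.f1 e'.inv_hom_id; rw [comp_f1, id_f1] at h; exact h⟩
  haveI : IsIso (-(𝟙 Q')) := ⟨-(𝟙 Q'), by simp, by simp⟩
  constructor
  · refine ⟨(kernel.mapIso M.d0 (dsum R (KP R P') (dagger R (KP R Q'))).d0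
      (asIso e'.hom.f0) (asIso e'.hom.f1) e'.hom.comm0).trans ?_⟩
    exact kerBiprodB R (0 : P' ⟶ P') (-(𝟙 Q')) rfl
  · refine ⟨(kernel.mapIso M.d1 (dsum R (KP R P') (dagger R (KP R Q'))).d1
      (asIso e'.hom.f1) (asIso e'.hom.f0) e'.hom.comm1).trans ?_⟩
    have h : (-(0 : Q' ⟶ Q')) = 0 := neg_zero
    exact kerBiprodA R (𝟙 P') (-(0 : Q' ⟶ Q')) h

end
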